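/- For any integer C ≥ 2 and any integer i ≥ 1, the number of tuples (a_1,…,a_{i+1}) ∈ {0,1,…,C−1}^{i+1} such that f_i(a_1,…,a_{i+1}) is even lies between (1/3)·C^{i+1} and (2/3)·C^{i+1}. Equivalently, if a_1,…,a_{i+1} are chosen independently and uniformly at random from {0,…,C−1}, then the probability that they ultimately iterate to an even integer is between 1/3 and 2/3. -/

import Mathlib

/-!
Modulo 2, `|x - y| ≡ x + y`, so `f_i(a_1, …, a_{i+1})` is congruent to `a_1` plus a quantity
depending only on `a_2, …, a_{i+1}`. Hence, once `a_2, …, a_{i+1}` are fixed, `f_i` is even for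
exactly the `a_1` of one prescribed parity: there are `⌊C/2⌋` or `⌈C/2⌉` of them, and both lie
between `C/3` and `2C/3` when `C ≥ 2`.
-/

/-- `iterDiff i a` is the sequence obtained from `a` after `i` iterations of
consecutive differencing: `iterDiff i a r = f_i(a_r, a_{r+1}, …, a_{r+i})`. -/
def iterDiff (i : ℕ) (a : ℕ → ℕ) : ℕ → ℕ :=
  (fun b n => Nat.dist (b n) (b (n + 1)))^[i] a

/-- Extend a tuple `x ∈ {0,…,C−1}^M` to a sequence `ℕ → ℕ` (by `0` outside). -/
def extend (M C : ℕ) (x : Fin M → Fin C) : ℕ → ℕ :=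
  fun n => if h : n < M then (x ⟨n, h⟩ : ℕ) else 0

open Finset

lemma Nat.cast_dist_zmod_two (a b : ℕ) : ((Nat.dist a b : ℕ) : ZMod 2) = a + b := by
  rcases le_total a b with h | h
  · rw [Nat.dist_eq_sub_of_le h, Nat.cast_sub h, CharTwo.sub_eq_add, add_comm]
  · rw [Nat.dist_eq_sub_of_le_right h, Nat.cast_sub h, CharTwo.sub_eq_add]

lemma iterDiff_succ_apply (i : ℕ) (a : ℕ → ℕ) (n : ℕ) :
    iterDiff (i + 1) a n = Nat.dist (iterDiff i a n) (iterDiff i a (n + 1)) := by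
  simp only [iterDiff, Function.iterate_succ_apply']

lemma iterDiff_congr_of_ge {a b : ℕ → ℕ} {n : ℕ} (h : ∀ k, n ≤ k → a k = b k) (i : ℕ) :
    iterDiff i a n = iterDiff i b n := by
  induction i generalizing n with
  | zero => exact h n le_rfl
  | succ i ih =>
    rw [iterDiff_succ_apply, iterDiff_succ_apply, ih h,
      ih fun k hk => h k (Nat.le_of_succ_le hk)]

lemma iterDiff_cast_sub_eq {a b : ℕ → ℕ} (h : ∀ k, 1 ≤ k → a k = b k) (i : ℕ) :
    ((iterDiff i a 0 : ℕ) : ZMod 2) - a 0 = (iterDiff i b 0 : ℕ) - b 0 := by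
  induction i with
  | zero => simp [iterDiff]
  | succ i ih =>
    rw [iterDiff_succ_apply, iterDiff_succ_apply, Nat.cast_dist_zmod_two, Nat.cast_dist_zmod_two,
      iterDiff_congr_of_ge h]
    linear_combination ih

lemma extend_cons_zero {i C : ℕ} (c : Fin C) (y : Fin i → Fin C) :
    extend (i + 1) C (Fin.cons c y) 0 = c := by
  simp [extend, show (⟨0, Nat.succ_pos i⟩ : Fin (i + 1)) = 0 from rfl]

lemma extend_cons_of_one_le {i C : ℕ} (c c' : Fin C) (y : Fin i → Fin C) {k : ℕ} (hk : 1 ≤ k) :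
    extend (i + 1) C (Fin.cons c y) k = extend (i + 1) C (Fin.cons c' y) k := by
  unfold extend
  split_ifs with h
  · obtain ⟨j, rfl⟩ := Nat.exists_eq_add_of_le' hk
    exact congrArg Fin.val ((Fin.cons_succ (α := fun _ => Fin C) c y ⟨j, by omega⟩).trans
      (Fin.cons_succ (α := fun _ => Fin C) c' y ⟨j, by omega⟩).symm)
  · rfl

lemma exists_even_iterDiff_extend_cons_iff {i C : ℕ} (y : Fin i → Fin C) :
    ∃ r : ZMod 2, ∀ c : Fin C,
      Even (iterDiff i (extend (i + 1) C (Fin.cons c y)) 0) ↔ ((c : ℕ) : ZMod 2) = r := by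
  rcases isEmpty_or_nonempty (Fin C) with hC | ⟨⟨c'⟩⟩
  · exact ⟨0, fun c => hC.elim c⟩
  refine ⟨c' - iterDiff i (extend (i + 1) C (Fin.cons c' y)) 0, fun c => ?_⟩
  have key := iterDiff_cast_sub_eq (fun k hk => extend_cons_of_one_le c c' y hk) i
  rw [extend_cons_zero, extend_cons_zero] at key
  have hc : ((iterDiff i (extend (i + 1) C (Fin.cons c y)) 0 : ℕ) : ZMod 2) =
      c - (c' - iterDiff i (extend (i + 1) C (Fin.cons c' y)) 0) := by
    linear_combination key
  rw [← ZMod.natCast_eq_zero_iff_even, hc, sub_eq_zero]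

lemma card_filter_range_natCast_eq (C : ℕ) (r : ZMod 2) :
    #{n ∈ range C | ((n : ℕ) : ZMod 2) = r} = (C + 1 - r.val) / 2 := by
  have hr := r.val_lt
  induction C with
  | zero => simp; omega
  | succ C ih =>
    have hC : (C : ZMod 2) = r ↔ C % 2 = r.val := by
      rw [← ZMod.val_natCast, (ZMod.val_injective 2).eq_iff]
    rw [range_add_one, filter_insert]
    by_cases h : C % 2 = r.val
    · rw [if_pos (hC.2 h), card_insert_of_notMem (by simp), ih]
      omega
    · rw [if_neg (mt hC.1 h), ih]
      omega

lemma card_filter_fin_natCast_eq_mem_Icc (C : ℕ) (r : ZMod 2) :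
    #{c : Fin C | ((c : ℕ) : ZMod 2) = r} ∈ Set.Icc (C / 2) ((C + 1) / 2) := by
  rw [card_filter, Fin.sum_univ_eq_sum_range (fun n => if (n : ZMod 2) = r then 1 else 0),
    ← card_filter, card_filter_range_natCast_eq]
  have := r.val_lt
  constructor <;> omega

lemma card_filter_eq_sum_card_filter_cons {α : Type*} [Fintype α] {n : ℕ}
    (P : (Fin (n + 1) → α) → Prop) [DecidablePred P] :
    #{x | P x} = ∑ y : Fin n → α, #{c | P (Fin.cons c y)} := by
  simp only [card_filter]
  rw [← Fintype.sum_equiv (Fin.consEquiv fun _ => α) _ _ fun _ => rfl, Fintype.sum_prod_type,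
    sum_comm]
  rfl

theorem stmt10_general (C : ℕ) (hC : 2 ≤ C) (i : ℕ) :
    (1 / 3 : ℝ) * (C : ℝ) ^ (i + 1) ≤
        (Nat.card {x : Fin (i + 1) → Fin C // Even (iterDiff i (extend (i + 1) C x) 0)} : ℝ) ∧
      (Nat.card {x : Fin (i + 1) → Fin C // Even (iterDiff i (extend (i + 1) C x) 0)} : ℝ) ≤
        (2 / 3 : ℝ) * (C : ℝ) ^ (i + 1) := by
  classical
  rw [Nat.card_eq_fintype_card, Fintype.card_subtype, card_filter_eq_sum_card_filter_cons]
  have hfibre (y : Fin i → Fin C) :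
      #{c | Even (iterDiff i (extend (i + 1) C (Fin.cons c y)) 0)} ∈
        Set.Icc (C / 2) ((C + 1) / 2) := by
    obtain ⟨r, hr⟩ := exists_even_iterDiff_extend_cons_iff y
    simpa only [hr] using card_filter_fin_natCast_eq_mem_Icc C r
  have hlow := card_nsmul_le_sum univ _ _ fun y _ => (hfibre y).1
  have hhigh := sum_le_card_nsmul univ _ _ fun y _ => (hfibre y).2
  simp only [card_univ, Fintype.card_fun, Fintype.card_fin, smul_eq_mul] at hlow hhigh
  have hlow' : (C : ℝ) ≤ 3 * (C / 2 : ℕ) := by exact_mod_cast (by omega : C ≤ 3 * (C / 2))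
  have hhigh' : 3 * ((C + 1) / 2 : ℕ) ≤ (2 * C : ℝ) := by
    exact_mod_cast (by omega : 3 * ((C + 1) / 2) ≤ 2 * C)
  constructor
  · calc (1 / 3 : ℝ) * C ^ (i + 1) = C ^ i * (C / 3) := by ring
      _ ≤ C ^ i * (C / 2 : ℕ) := by gcongr; linarith
      _ ≤ _ := by exact_mod_cast hlow
  · calc _ ≤ (C ^ i * ((C + 1) / 2 : ℕ) : ℝ) := by exact_mod_cast hhigh
      _ ≤ C ^ i * (2 * C / 3) := by gcongr; linarith
      _ = 2 / 3 * C ^ (i + 1) := by ring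

/-- For any `C ≥ 2` and `i ≥ 1`, the number of tuples
`(a_1,…,a_{i+1}) ∈ {0,…,C−1}^{i+1}` such that `f_i(a_1,…,a_{i+1})` is even lies
between `(1/3)·C^{i+1}` and `(2/3)·C^{i+1}`. -/
theorem stmt10 (C : ℕ) (hC : 2 ≤ C) (i : ℕ) (hi : 1 ≤ i) :
    (1 / 3 : ℝ) * (C : ℝ) ^ (i + 1) ≤
        (Nat.card {x : Fin (i + 1) → Fin C // Even (iterDiff i (extend (i + 1) C x) 0)} : ℝ) ∧
      (Nat.card {x : Fin (i + 1) → Fin C // Even (iterDiff i (extend (i + 1) C x) 0)} : ℝ) ≤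
        (2 / 3 : ℝ) * (C : ℝ) ^ (i + 1) :=
  stmt10_general C hC i
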